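/- For every x ∈ ℝ^n, γ > 0 and g₁, g₂ ∈ ℝ^n: ‖x⁺(x, g₁, γ) − x⁺(x, g₂, γ)‖ ≤ γ·‖g₁ − g₂‖; equivalently, the map g ↦ P_γ(x, g) is Lipschitz continuous with constant 1, i.e. ‖P_γ(x, g₁) − P_γ(x, g₂)‖ ≤ ‖g₁ − g₂‖. -/

import Mathlib

/-!
For convex `φ`, the objective `ψ u = ⟪g, u - x⟫ + φ u + ‖u - x‖² / (2γ)` is `γ⁻¹`-strongly convex,
so its minimiser `p` satisfies the quadratic growth bound `ψ p + ‖u - p‖² / (2γ) ≤ ψ u`.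
Writing this for `g₁` at `u = p₂` and for `g₂` at `u = p₁` and adding, everything cancels except
`‖p₁ - p₂‖² / γ ≤ ⟪g₁ - g₂, p₂ - p₁⟫`, and Cauchy–Schwarz finishes.
-/

open scoped RealInnerProductSpace
open Set Filter Topology

section

variable {E : Type*} [NormedAddCommGroup E] [InnerProductSpace ℝ E]

lemma StrongConvexOn.add_mul_sq_norm_sub_le {s : Set E} {f : E → ℝ} {m : ℝ} {p u : E}
    (hf : StrongConvexOn s m f) (hp : p ∈ s) (hu : u ∈ s) (hmin : IsMinOn f s p) :
    f p + m / 2 * ‖u - p‖ ^ 2 ≤ f u := by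
  have hseg : ∀ t ∈ Ioo (0 : ℝ) 1, f p + (1 - t) * (m / 2 * ‖u - p‖ ^ 2) ≤ f u := by
    rintro t ⟨ht₀, ht₁⟩
    have hconv := hf.2 hp hu (sub_nonneg.2 ht₁.le) ht₀.le (sub_add_cancel 1 t)
    have hle : f p ≤ f ((1 - t) • p + t • u) :=
      hmin (hf.1 hp hu (sub_nonneg.2 ht₁.le) ht₀.le (sub_add_cancel 1 t))
    rw [norm_sub_rev, smul_eq_mul, smul_eq_mul] at hconv
    refine le_of_mul_le_mul_left ?_ ht₀
    linarith
  have hlim : Tendsto (fun t : ℝ ↦ f p + (1 - t) * (m / 2 * ‖u - p‖ ^ 2)) (𝓝[>] 0)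
      (𝓝 (f p + m / 2 * ‖u - p‖ ^ 2)) := by
    refine tendsto_nhdsWithin_of_tendsto_nhds (Continuous.tendsto' ?_ _ _ (by ring))
    fun_prop
  exact le_of_tendsto hlim (eventually_of_mem (Ioo_mem_nhdsGT one_pos) hseg)

/-- The paper's `ψ_γ(x, g, ·)` is `proxObjective (fun u ↦ h (c x + J x (u - x))) x g γ`. -/
noncomputable def proxObjective (φ : E → ℝ) (x g : E) (γ : ℝ) (u : E) : ℝ :=
  ⟪g, u - x⟫ + φ u + ‖u - x‖ ^ 2 / (2 * γ)

lemma strongConvexOn_proxObjective {φ : E → ℝ} (hφ : ConvexOn ℝ univ φ) (x g : E) {γ : ℝ}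
    (hγ : 0 < γ) : StrongConvexOn univ γ⁻¹ (proxObjective φ x g γ) := by
  rw [strongConvexOn_iff_convex]
  have hlin : ConvexOn ℝ univ fun u ↦ ⟪g - γ⁻¹ • x, u⟫ :=
    (innerₗ E (g - γ⁻¹ • x)).convexOn convex_univ
  refine (hφ.add (hlin.add_const (γ⁻¹ / 2 * ‖x‖ ^ 2 - ⟪g, x⟫))).congr fun u _ ↦ ?_
  simp only [proxObjective, Pi.add_apply, norm_sub_sq_real, inner_sub_left, inner_sub_right,
    real_inner_smul_left, real_inner_comm x u]
  field_simp
  ring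

lemma proxObjective_sub_proxObjective (φ : E → ℝ) (x g₁ g₂ : E) (γ : ℝ) (u : E) :
    proxObjective φ x g₁ γ u - proxObjective φ x g₂ γ u = ⟪g₁ - g₂, u - x⟫ := by
  simp only [proxObjective, inner_sub_left]
  ring

theorem norm_sub_le_of_isMinOn_proxObjective {φ : E → ℝ} (hφ : ConvexOn ℝ univ φ)
    {x g₁ g₂ p₁ p₂ : E} {γ : ℝ} (hγ : 0 < γ)
    (hp₁ : IsMinOn (proxObjective φ x g₁ γ) univ p₁)
    (hp₂ : IsMinOn (proxObjective φ x g₂ γ) univ p₂) :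
    ‖p₁ - p₂‖ ≤ γ * ‖g₁ - g₂‖ := by
  have grow₁ := (strongConvexOn_proxObjective hφ x g₁ hγ).add_mul_sq_norm_sub_le
    (mem_univ p₁) (mem_univ p₂) hp₁
  have grow₂ := (strongConvexOn_proxObjective hφ x g₂ hγ).add_mul_sq_norm_sub_le
    (mem_univ p₂) (mem_univ p₁) hp₂
  have hsum : γ⁻¹ * ‖p₁ - p₂‖ ^ 2 ≤ ⟪g₁ - g₂, p₂ - p₁⟫ := by
    have h₁ := proxObjective_sub_proxObjective φ x g₁ g₂ γ p₁
    have h₂ := proxObjective_sub_proxObjective φ x g₁ g₂ γ p₂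
    rw [← sub_sub_sub_cancel_right p₂ p₁ x, inner_sub_right]
    rw [norm_sub_rev] at grow₁
    linarith
  have hcs : ⟪g₁ - g₂, p₂ - p₁⟫ ≤ ‖g₁ - g₂‖ * ‖p₁ - p₂‖ :=
    (real_inner_le_norm _ _).trans_eq (by rw [norm_sub_rev p₂])
  have hsq : ‖p₁ - p₂‖ * ‖p₁ - p₂‖ ≤ γ * ‖g₁ - g₂‖ * ‖p₁ - p₂‖ := by
    have := hsum.trans hcs
    rw [inv_mul_le_iff₀ hγ] at this
    linarith
  rcases (norm_nonneg (p₁ - p₂)).eq_or_lt with hzero | hpos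
  · rw [← hzero]; positivity
  · exact le_of_mul_le_mul_right hsq hpos

end

theorem stmt_4 {n q : ℕ}
    (c : EuclideanSpace ℝ (Fin n) → EuclideanSpace ℝ (Fin q))
    (J : EuclideanSpace ℝ (Fin n) → EuclideanSpace ℝ (Fin n) →L[ℝ] EuclideanSpace ℝ (Fin q))
    (h : EuclideanSpace ℝ (Fin q) → ℝ)
    (hconv : ConvexOn ℝ Set.univ h)
    (x g₁ g₂ : EuclideanSpace ℝ (Fin n)) (γ : ℝ) (hγ : 0 < γ)
    (xplus₁ xplus₂ : EuclideanSpace ℝ (Fin n))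
    (hmin₁ : ∀ u, ⟪g₁, xplus₁ - x⟫ + h (c x + J x (xplus₁ - x)) + ‖xplus₁ - x‖ ^ 2 / (2 * γ) ≤
      ⟪g₁, u - x⟫ + h (c x + J x (u - x)) + ‖u - x‖ ^ 2 / (2 * γ))
    (hmin₂ : ∀ u, ⟪g₂, xplus₂ - x⟫ + h (c x + J x (xplus₂ - x)) + ‖xplus₂ - x‖ ^ 2 / (2 * γ) ≤
      ⟪g₂, u - x⟫ + h (c x + J x (u - x)) + ‖u - x‖ ^ 2 / (2 * γ)) :
    ‖xplus₁ - xplus₂‖ ≤ γ * ‖g₁ - g₂‖ ∧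
      ‖γ⁻¹ • (x - xplus₁) - γ⁻¹ • (x - xplus₂)‖ ≤ ‖g₁ - g₂‖ := by
  have hφ : ConvexOn ℝ univ fun u ↦ h (c x + J x (u - x)) :=
    (hconv.comp_affineMap
      ((J x).toLinearMap.toAffineMap + AffineMap.const ℝ _ (c x - J x x))).congr
      fun u _ ↦ by
        simp only [AffineMap.coe_add, LinearMap.coe_toAffineMap, ContinuousLinearMap.coe_coe,
          AffineMap.coe_const, Function.comp_apply, Pi.add_apply, Function.const_apply, map_sub]
        abel_nf
  have hstep : ‖xplus₁ - xplus₂‖ ≤ γ * ‖g₁ - g₂‖ :=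
    norm_sub_le_of_isMinOn_proxObjective hφ hγ (fun u _ ↦ hmin₁ u) (fun u _ ↦ hmin₂ u)
  refine ⟨hstep, ?_⟩
  calc ‖γ⁻¹ • (x - xplus₁) - γ⁻¹ • (x - xplus₂)‖ = γ⁻¹ * ‖xplus₁ - xplus₂‖ := by
        rw [← smul_sub, sub_sub_sub_cancel_left, norm_smul, norm_inv, Real.norm_of_nonneg hγ.le,
          norm_sub_rev]
    _ ≤ ‖g₁ - g₂‖ := (inv_mul_le_iff₀ hγ).2 hstep
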